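/- arXiv:1304.8042 — 3 statements merged into one kernel-verified Lean document; each statement's English description precedes it below -/
import Mathlib

section
/- At the equilibrium point (Σ₊, Σ₋, B₂) = (0,0,0) of the Bianchi I viscous MHD system, the Jacobian matrix of the vector field has eigenvalues λ₁ = (1/2)(-1 + 3w - 9ξ₀) and λ₂ = λ₃ = (1/2)(-3 + 3w - 4η₀ - 9ξ₀). -/
/-- Total fluid density `Ω_f`. -/
noncomputable def OmegaF (Sp Sm B : ℝ) : ℝ := 1 - (3/2) * B^2 - Sm^2 - Sp^2

/-- Deceleration parameter `q`. -/
noncomputable def qParam (w ξ₀ Sp Sm B : ℝ) : ℝ :=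
  2 * (Sp^2 + Sm^2) + OmegaF Sp Sm B * (1/2 + 3*w/2) - (9/2) * ξ₀ + (3/2) * B^2

/-- The Bianchi I viscous MHD vector field on `Fin 3 → ℝ`, state `x = (Σ₊, Σ₋, B₂)`. -/
noncomputable def fSys (w ξ₀ η₀ : ℝ) (x : Fin 3 → ℝ) : Fin 3 → ℝ :=
  ![-(3/2) * (x 2)^2 + x 0 * (qParam w ξ₀ (x 0) (x 1) (x 2) - 2 * (1 + η₀)),
    -(3 * Real.sqrt 3 / 2) * (x 2)^2 + x 1 * (qParam w ξ₀ (x 0) (x 1) (x 2) - 2 * (1 + η₀)),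
    x 2 * (-1 + qParam w ξ₀ (x 0) (x 1) (x 2) + Real.sqrt 3 * x 1 + x 0)]

/-- The Jacobian matrix of the vector field at a point `a`. -/
noncomputable def jacobian (w ξ₀ η₀ : ℝ) (a : Fin 3 → ℝ) : Matrix (Fin 3) (Fin 3) ℝ :=
  fun i j => fderiv ℝ (fun x => fSys w ξ₀ η₀ x i) a (Pi.single j 1)

noncomputable def pr3 (i : Fin 3) : (Fin 3 → ℝ) →L[ℝ] ℝ := ContinuousLinearMap.proj i

lemma hpr (i : Fin 3) : HasFDerivAt (fun x : Fin 3 → ℝ => x i) (pr3 i) 0 :=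
  (pr3 i).hasFDerivAt

lemma hG (w ξ₀ η₀ : ℝ) :
    DifferentiableAt ℝ
      (fun x : Fin 3 → ℝ => qParam w ξ₀ (x 0) (x 1) (x 2) - 2 * (1 + η₀)) 0 := by
  simp only [qParam, OmegaF]
  fun_prop

lemma hH (w ξ₀ : ℝ) :
    DifferentiableAt ℝ
      (fun x : Fin 3 → ℝ => -1 + qParam w ξ₀ (x 0) (x 1) (x 2) + Real.sqrt 3 * x 1 + x 0) 0 := by
  simp only [qParam, OmegaF]
  fun_prop

lemma jac_eq (w ξ₀ η₀ : ℝ) :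
    jacobian w ξ₀ η₀ 0 =
      Matrix.diagonal ![(1/2) * (-3 + 3*w - 4*η₀ - 9*ξ₀),
        (1/2) * (-3 + 3*w - 4*η₀ - 9*ξ₀), (1/2) * (-1 + 3*w - 9*ξ₀)] := by
  have h0 :
      HasFDerivAt (fun x : Fin 3 → ℝ => fSys w ξ₀ η₀ x 0)
        (((-(3/2) : ℝ)) • (((0 : Fin 3 → ℝ) 2) • pr3 2 + ((0 : Fin 3 → ℝ) 2) • pr3 2) +
          (((0 : Fin 3 → ℝ) 0) • fderiv ℝ
              (fun x : Fin 3 → ℝ => qParam w ξ₀ (x 0) (x 1) (x 2) - 2 * (1 + η₀)) 0 +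
            (qParam w ξ₀ ((0:Fin 3 → ℝ) 0) ((0:Fin 3 → ℝ) 1) ((0:Fin 3 → ℝ) 2) - 2 * (1 + η₀)) • pr3 0)) 0 := by
    have base := (((hpr 2).mul (hpr 2)).const_mul ((-(3/2)) : ℝ)).add
        ((hpr 0).mul (hG w ξ₀ η₀).hasFDerivAt)
    exact base.congr_of_eventuallyEq
      (Filter.Eventually.of_forall fun x => by simp [fSys]; ring)
  have h1 :
      HasFDerivAt (fun x : Fin 3 → ℝ => fSys w ξ₀ η₀ x 1)
        (((-(3 * Real.sqrt 3 / 2) : ℝ)) • (((0 : Fin 3 → ℝ) 2) • pr3 2 + ((0 : Fin 3 → ℝ) 2) • pr3 2) +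
          (((0 : Fin 3 → ℝ) 1) • fderiv ℝ
              (fun x : Fin 3 → ℝ => qParam w ξ₀ (x 0) (x 1) (x 2) - 2 * (1 + η₀)) 0 +
            (qParam w ξ₀ ((0:Fin 3 → ℝ) 0) ((0:Fin 3 → ℝ) 1) ((0:Fin 3 → ℝ) 2) - 2 * (1 + η₀)) • pr3 1)) 0 := by
    have base := (((hpr 2).mul (hpr 2)).const_mul ((-(3 * Real.sqrt 3 / 2)) : ℝ)).add
        ((hpr 1).mul (hG w ξ₀ η₀).hasFDerivAt)
    exact base.congr_of_eventuallyEq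
      (Filter.Eventually.of_forall fun x => by simp [fSys]; ring)
  have h2 :
      HasFDerivAt (fun x : Fin 3 → ℝ => fSys w ξ₀ η₀ x 2)
        (((0 : Fin 3 → ℝ) 2) • fderiv ℝ
            (fun x : Fin 3 → ℝ => -1 + qParam w ξ₀ (x 0) (x 1) (x 2) + Real.sqrt 3 * x 1 + x 0) 0 +
          (-1 + qParam w ξ₀ ((0:Fin 3 → ℝ) 0) ((0:Fin 3 → ℝ) 1) ((0:Fin 3 → ℝ) 2) +
              Real.sqrt 3 * ((0:Fin 3 → ℝ) 1) + (0:Fin 3 → ℝ) 0) • pr3 2) 0 := by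
    have base := (hpr 2).mul (hH w ξ₀).hasFDerivAt
    exact base.congr_of_eventuallyEq
      (Filter.Eventually.of_forall fun x => by simp [fSys])
  have E : ∀ i j : Fin 3, jacobian w ξ₀ η₀ 0 i j =
      Matrix.diagonal ![(1/2) * (-3 + 3*w - 4*η₀ - 9*ξ₀),
        (1/2) * (-3 + 3*w - 4*η₀ - 9*ξ₀), (1/2) * (-1 + 3*w - 9*ξ₀)] i j := by
    intro i j
    fin_cases i
    · show fderiv ℝ (fun x => fSys w ξ₀ η₀ x 0) 0 (Pi.single j 1) = _
      rw [h0.fderiv]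
      fin_cases j <;>
        simp [pr3, qParam, OmegaF, Matrix.diagonal, Pi.single_apply] <;> ring
    · show fderiv ℝ (fun x => fSys w ξ₀ η₀ x 1) 0 (Pi.single j 1) = _
      rw [h1.fderiv]
      fin_cases j <;>
        simp [pr3, qParam, OmegaF, Matrix.diagonal, Pi.single_apply] <;> ring
    · show fderiv ℝ (fun x => fSys w ξ₀ η₀ x 2) 0 (Pi.single j 1) = _
      rw [h2.fderiv]
      fin_cases j <;>
        simp [pr3, qParam, OmegaF, Matrix.diagonal, Pi.single_apply] <;> ring
  exact funext fun i => funext fun j => E i j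


/-- at the equilibrium `(0,0,0)`, the Jacobian has eigenvalues
`λ₁ = (1/2)(-1+3w-9ξ₀)` and `λ₂ = λ₃ = (1/2)(-3+3w-4η₀-9ξ₀)`. -/
theorem flrw_jacobian_eigenvalues (w ξ₀ η₀ : ℝ) :
    Module.End.HasEigenvalue (Matrix.toLin' (jacobian w ξ₀ η₀ 0))
      ((1/2) * (-1 + 3*w - 9*ξ₀)) ∧
    Module.End.HasEigenvalue (Matrix.toLin' (jacobian w ξ₀ η₀ 0))
      ((1/2) * (-3 + 3*w - 4*η₀ - 9*ξ₀)) ∧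
    (Matrix.charpoly (jacobian w ξ₀ η₀ 0) =
      (Polynomial.X - Polynomial.C ((1/2) * (-1 + 3*w - 9*ξ₀))) *
      (Polynomial.X - Polynomial.C ((1/2) * (-3 + 3*w - 4*η₀ - 9*ξ₀)))^2) := by
  rw [jac_eq]
  refine ⟨?_, ?_, ?_⟩
  · apply Module.End.hasEigenvalue_of_hasEigenvector (x := Pi.single 2 1)
    refine ⟨Module.End.mem_eigenspace_iff.2 ?_, ?_⟩
    · funext x
      fin_cases x <;> simp [Matrix.toLin'_apply, Matrix.mulVec_diagonal, Pi.single_apply]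
    · intro h
      have := congrFun h 2
      simp at this
  · apply Module.End.hasEigenvalue_of_hasEigenvector (x := Pi.single 0 1)
    refine ⟨Module.End.mem_eigenspace_iff.2 ?_, ?_⟩
    · funext x
      fin_cases x <;> simp [Matrix.toLin'_apply, Matrix.mulVec_diagonal, Pi.single_apply]
    · intro h
      have := congrFun h 0
      simp at this
  · rw [Matrix.charpoly_of_upperTriangular _ (Matrix.blockTriangular_diagonal _)]
    rw [Fin.prod_univ_three]
    simp only [Matrix.diagonal_apply_eq, Matrix.cons_val_zero, Matrix.cons_val_one,
      Matrix.head_cons, Matrix.cons_val_two, Matrix.tail_cons]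
    ring
end

section
/- If η₀ > 0, 1/3 < w ≤ 1 and 0 ≤ ξ₀ < (3w-1)/9, then λ₁ = (1/2)(-1 + 3w - 9ξ₀) > 0 while λ₂ = (1/2)(-3 + 3w - 4η₀ - 9ξ₀) < 0; hence the flat FLRW equilibrium is a saddle point. -/
/-- for `η₀ > 0`, `1/3 < w ≤ 1`, `0 ≤ ξ₀ < (3w-1)/9`, the eigenvalue
`λ₁` is positive while `λ₂` is negative: the flat FLRW equilibrium is a saddle. -/
theorem flrw_saddle_region (w ξ₀ η₀ : ℝ)
    (hη : 0 < η₀) (hw₁ : 1/3 < w) (hw₂ : w ≤ 1) (hξ₁ : 0 ≤ ξ₀) (hξ₂ : ξ₀ < (3*w - 1)/9) :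
    (1/2) * (-1 + 3*w - 9*ξ₀) > 0 ∧ (1/2) * (-3 + 3*w - 4*η₀ - 9*ξ₀) < 0 := by constructor <;> nlinarith
end

section
/- If η₀ ≥ 0, ξ₀ = 0, -1 ≤ w < 1/3, and 0 < Ω_f ≤ 1 with (Σ², B₂²) ≠ (0,0), then Ω_f' = Ω_f[Σ²(3 - 3w) + B₂²(3 - 9w)/2] + 4η₀Σ² > 0, i.e. Ω_f is strictly increasing off the equilibrium. -/
/-- with `η₀ ≥ 0`, `ξ₀ = 0`, `-1 ≤ w < 1/3`, `0 < Ω_f ≤ 1` and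
`(Σ², B₂²) ≠ (0,0)`, the quantity `Ω_f'` is strictly positive. -/
theorem omegaF_strictly_increasing (w η₀ Sp Sm B : ℝ)
    (hη : 0 ≤ η₀) (hw₁ : -1 ≤ w) (hw₂ : w < 1/3)
    (hΩpos : 0 < 1 - (3/2) * B^2 - Sp^2 - Sm^2)
    (hΩle : 1 - (3/2) * B^2 - Sp^2 - Sm^2 ≤ 1)
    (hne : ¬(Sp^2 + Sm^2 = 0 ∧ B^2 = 0)) :
    0 < (1 - (3/2) * B^2 - Sp^2 - Sm^2) *
          ((Sp^2 + Sm^2) * (3 - 3*w) + B^2 * (3 - 9*w)/2)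
        + 4 * η₀ * (Sp^2 + Sm^2) := by
  have hS : 0 ≤ Sp^2 + Sm^2 := by positivity
  have hB : 0 ≤ B^2 := by positivity
  have h1 : 0 < 3 - 3*w := by linarith
  have h2 : 0 < 3 - 9*w := by linarith
  have hpos : 0 < (Sp^2 + Sm^2) * (3 - 3*w) + B^2 * (3 - 9*w)/2 := by
    rcases (not_and_or.mp hne) with h | h
    · have : 0 < Sp^2 + Sm^2 := lt_of_le_of_ne hS (Ne.symm h)
      nlinarith
    · have : 0 < B^2 := lt_of_le_of_ne hB (Ne.symm h)
      nlinarith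
  nlinarith
end
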